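/- Let (A, →, ⇝, 1) be a pseudo-BCI algebra. The following are equivalent: (a) A is p-semisimple; (b) Ker(d) = {1} for every regular type II implicative derivation d on A; (c) the identity map is the only regular type II implicative derivation on A. -/
import Mathlib


/-- A pseudo-BCI algebra `(A, →, ⇝, 1)`: `ar` is `→`, `wa` is `⇝`, `one` is `1`. -/
structure PseudoBCI (A : Type*) where
  ar : A → A → A
  wa : A → A → A
  one : A
  ax1 : ∀ x y z, wa (ar x y) (wa (ar y z) (ar x z)) = one
  ax2 : ∀ x y z, ar (wa x y) (ar (wa y z) (ar x z)) = one
  ax3 : ∀ x, ar one x = x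
  ax4 : ∀ x, wa one x = x
  ax5 : ∀ x y, ar x y = one → ar y x = one → x = y

namespace PseudoBCI

variable {A : Type*}

/-- The order: `x ≤ y` iff `x → y = 1`. -/
def le (P : PseudoBCI A) (x y : A) : Prop := P.ar x y = P.one

/-- `x ∪₁ y = (x → y) ⇝ y`. -/
def cup1 (P : PseudoBCI A) (x y : A) : A := P.wa (P.ar x y) y

/-- `x ∪₂ y = (x ⇝ y) → y`. -/
def cup2 (P : PseudoBCI A) (x y : A) : A := P.ar (P.wa x y) y

/-- `φ_x = (x → 1) ⇝ 1`. -/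
def phi (P : PseudoBCI A) (x : A) : A := P.wa (P.ar x P.one) P.one

/-- `a` is an atom: `a ≤ x` implies `x = a`. -/
def IsAtom (P : PseudoBCI A) (a : A) : Prop := ∀ x, P.le a x → x = a

/-- `x ∈ K(A)` iff `x ≤ 1`. -/
def InK (P : PseudoBCI A) (x : A) : Prop := P.le x P.one

/-- Type I implicative derivation. -/
def IsIDerI (P : PseudoBCI A) (d : A → A) : Prop :=
  (∀ x y, d (P.ar x y) = P.cup2 (P.ar x (d y)) (P.ar (d x) y)) ∧
  (∀ x y, d (P.wa x y) = P.cup1 (P.wa x (d y)) (P.wa (d x) y))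

/-- Type II implicative derivation. -/
def IsIDerII (P : PseudoBCI A) (d : A → A) : Prop :=
  (∀ x y, d (P.ar x y) = P.cup2 (P.ar (d x) y) (P.ar x (d y))) ∧
  (∀ x y, d (P.wa x y) = P.cup1 (P.wa (d x) y) (P.wa x (d y)))

/-- Type I symmetric derivation. -/
def IsSDerI (P : PseudoBCI A) (d : A → A) : Prop :=
  (∀ x y, d (P.ar x y) = P.cup2 (P.ar x (d y)) (P.ar y (d x))) ∧
  (∀ x y, d (P.wa x y) = P.cup1 (P.wa x (d y)) (P.wa y (d x)))

/-- Type II symmetric derivation. -/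
def IsSDerII (P : PseudoBCI A) (d : A → A) : Prop :=
  (∀ x y, d (P.ar x y) = P.cup2 (P.ar (d x) y) (P.ar (d y) x)) ∧
  (∀ x y, d (P.wa x y) = P.cup1 (P.wa (d x) y) (P.wa (d y) x))

/-- Deductive system. -/
def IsDS (P : PseudoBCI A) (D : Set A) : Prop :=
  P.one ∈ D ∧ ∀ x y, x ∈ D → P.ar x y ∈ D → y ∈ D

/-- A is p-semisimple: `x ≤ 1` implies `x = 1`. -/
def PSemisimple (P : PseudoBCI A) : Prop := ∀ x, P.le x P.one → x = P.one

end PseudoBCI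

open PseudoBCI

namespace PseudoBCI

variable {A : Type*} (P : PseudoBCI A)

lemma b2a (y z : A) : P.ar y (P.ar (P.wa y z) z) = P.one := by
  have h := P.ax2 P.one y z
  rwa [P.ax4, P.ax3] at h

lemma b2w (y z : A) : P.wa y (P.wa (P.ar y z) z) = P.one := by
  have h := P.ax1 P.one y z
  rwa [P.ax3, P.ax3] at h

lemma refl_ar (x : A) : P.ar x x = P.one := by
  have h := P.b2a P.one x
  rwa [P.ax4, P.ax3] at h

lemma refl_wa (x : A) : P.wa x x = P.one := by
  have h := P.b2w P.one x
  rwa [P.ax3, P.ax4] at h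

lemma a2w {x y : A} (h : P.ar x y = P.one) : P.wa x y = P.one := by
  have h2 := P.b2w x y
  rwa [h, P.ax4] at h2

lemma w2a {x y : A} (h : P.wa x y = P.one) : P.ar x y = P.one := by
  have h2 := P.b2a x y
  rwa [h, P.ax3] at h2

lemma trans_ar {x y z : A} (hxy : P.ar x y = P.one) (hyz : P.ar y z = P.one) :
    P.ar x z = P.one := by
  have h := P.ax1 x y z
  rwa [hxy, hyz, P.ax4, P.ax4] at h

lemma anti_ar {x y : A} (h : P.ar x y = P.one) (z : A) :
    P.ar (P.ar y z) (P.ar x z) = P.one := by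
  have h2 := P.ax1 x y z
  rw [h, P.ax4] at h2
  exact P.w2a h2

lemma mono_ar {x y : A} (h : P.ar x y = P.one) (z : A) :
    P.ar (P.ar z x) (P.ar z y) = P.one := by
  have h2 := P.ax1 z x y
  rw [h, P.ax4] at h2
  exact P.w2a h2

/-- `x ⇝ y ≤ x → y`. -/
lemma d1 (x y : A) : P.ar (P.wa x y) (P.ar x y) = P.one := by
  have h := P.ax2 x y y
  rwa [P.refl_wa, P.ax3] at h

/-- pure-`→` form of `x ≤ (x→y)→y`. -/
lemma b2aa (x y : A) : P.ar x (P.ar (P.ar x y) y) = P.one :=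
  P.trans_ar (P.w2a (P.b2w x y)) (P.d1 (P.ar x y) y)

lemma exAA_le (x y z : A) :
    P.ar (P.ar x (P.ar y z)) (P.ar y (P.ar x z)) = P.one := by
  have hA := P.w2a (P.ax1 x (P.ar y z) z)
  have hB := P.d1 (P.ar (P.ar y z) z) (P.ar x z)
  have hC := P.trans_ar hA hB
  have hE := P.anti_ar (P.b2aa y z) (P.ar x z)
  exact P.trans_ar hC hE

/-- pure-`→` exchange. -/
lemma exAA (x y z : A) : P.ar x (P.ar y z) = P.ar y (P.ar x z) :=
  P.ax5 _ _ (P.exAA_le x y z) (P.exAA_le y x z)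

/-- `x → 1 = x ⇝ 1`. -/
lemma neg_eq (x : A) : P.ar x P.one = P.wa x P.one := by
  apply P.ax5
  · apply P.w2a
    have h := P.ax1 x P.one x
    rwa [P.ax3, P.refl_ar] at h
  · have h := P.ax2 x P.one x
    rwa [P.ax4, P.refl_ar] at h

lemma phi_eq_ar (x : A) : P.phi x = P.ar (P.ar x P.one) P.one :=
  (P.neg_eq _).symm

lemma N_ar {x y : A} (h : P.ar x y = P.one) : P.ar (P.ar y x) P.one = P.one := by
  have h2 := P.ax1 x y x
  rw [h, P.ax4, P.refl_ar] at h2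
  rw [P.neg_eq]
  exact h2

/-- `a → b ≤ (b → a) → 1`. -/
lemma contrap (a b : A) :
    P.ar (P.ar a b) (P.ar (P.ar b a) P.one) = P.one := by
  have h := P.ax1 a b a
  rw [P.refl_ar] at h
  have h2 := P.w2a h
  rwa [← P.neg_eq] at h2

lemma k_neg {k : A} (hk : P.ar k P.one = P.one) (y : A) :
    P.ar k (P.ar y P.one) = P.ar y P.one := by
  rw [P.exAA k y P.one, hk]

lemma k_arneg {k : A} (hk : P.ar k P.one = P.one) (z y : A) :
    P.ar k (P.ar z (P.ar y P.one)) = P.ar z (P.ar y P.one) := by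
  rw [P.exAA k z (P.ar y P.one), P.k_neg hk y]

lemma maximal_neg {y u : A} (h : P.ar (P.ar y P.one) u = P.one) :
    u = P.ar y P.one := by
  have hk := P.N_ar h
  have h2 := P.b2aa u (P.ar y P.one)
  rw [P.k_neg hk y] at h2
  exact P.ax5 u _ h2 h

lemma maximal_arneg {z y u : A} (h : P.ar (P.ar z (P.ar y P.one)) u = P.one) :
    u = P.ar z (P.ar y P.one) := by
  have hk := P.N_ar h
  have h2 := P.b2aa u (P.ar z (P.ar y P.one))
  rw [P.k_arneg hk z y] at h2
  exact P.ax5 u _ h2 h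

lemma x_le_phi (x : A) : P.ar x (P.phi x) = P.one := by
  rw [P.phi_eq_ar]
  exact P.b2aa x P.one

lemma phi_mono {a b : A} (h : P.ar a b = P.one) :
    P.ar (P.phi a) (P.phi b) = P.one := by
  rw [P.phi_eq_ar, P.phi_eq_ar]
  exact P.anti_ar (P.anti_ar h P.one) P.one

/-- `((u→1)→x)→x = u→1`. -/
lemma p3 (u x : A) :
    P.ar (P.ar (P.ar u P.one) x) x = P.ar u P.one :=
  P.maximal_neg (P.b2aa (P.ar u P.one) x)

/-- `((u→1)→x)→1 = x→(u→1)`. -/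
lemma p2 (u x : A) :
    P.ar (P.ar (P.ar u P.one) x) P.one = P.ar x (P.ar u P.one) := by
  have hc := P.contrap (P.ar u P.one) x
  rw [P.exAA (P.ar (P.ar u P.one) x) (P.ar x (P.ar u P.one)) P.one] at hc
  exact P.maximal_arneg hc

/-- `x ⇝ (u→1) = x → (u→1)`. -/
lemma wan (x u : A) :
    P.wa x (P.ar u P.one) = P.ar x (P.ar u P.one) := by
  have h := P.ax1 (P.ar (P.ar u P.one) x) P.one x
  rw [P.ax3, P.p3 u x, P.p2 u x] at h
  exact P.ax5 _ _ (P.d1 x (P.ar u P.one)) (P.w2a h)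

lemma wan_phi (x y : A) : P.wa x (P.phi y) = P.ar x (P.phi y) := by
  rw [P.phi_eq_ar]
  exact P.wan x (P.ar y P.one)

lemma m_max {x y u : A} (h : P.ar (P.ar x (P.phi y)) u = P.one) :
    u = P.ar x (P.phi y) := by
  rw [P.phi_eq_ar] at h ⊢
  exact P.maximal_arneg h

lemma maximal_phi {x u : A} (h : P.ar (P.phi x) u = P.one) : u = P.phi x := by
  rw [P.phi_eq_ar] at h ⊢
  exact P.maximal_neg h

lemma phi_ar (x y : A) : P.phi (P.ar x y) = P.ar x (P.phi y) := by
  have hm : P.ar (P.ar x y) (P.ar x (P.phi y)) = P.one := P.mono_ar (P.x_le_phi y) x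
  have hfix : P.phi (P.ar x (P.phi y)) = P.ar x (P.phi y) :=
    P.m_max (P.x_le_phi (P.ar x (P.phi y)))
  have h2 := P.phi_mono hm
  rw [hfix] at h2
  exact (P.maximal_phi h2).symm

lemma phi_wa (x y : A) : P.phi (P.wa x y) = P.wa x (P.phi y) := by
  have hm : P.ar (P.wa x y) (P.ar x (P.phi y)) = P.one :=
    P.trans_ar (P.d1 x y) (P.mono_ar (P.x_le_phi y) x)
  have hfix : P.phi (P.ar x (P.phi y)) = P.ar x (P.phi y) :=
    P.m_max (P.x_le_phi (P.ar x (P.phi y)))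
  have h2 := P.phi_mono hm
  rw [hfix] at h2
  rw [P.wan_phi]
  exact (P.maximal_phi h2).symm

lemma hle_ar (x y : A) :
    P.ar (P.ar (P.phi x) y) (P.ar x (P.phi y)) = P.one :=
  P.trans_ar (P.anti_ar (P.x_le_phi x) y) (P.mono_ar (P.x_le_phi y) x)

lemma hle_wa (x y : A) :
    P.ar (P.wa (P.phi x) y) (P.wa x (P.phi y)) = P.one := by
  rw [P.wan_phi]
  exact P.trans_ar (P.d1 (P.phi x) y) (P.hle_ar x y)

lemma phi_one : P.phi P.one = P.one := by
  show P.wa (P.ar P.one P.one) P.one = P.one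
  rw [P.ax3, P.ax4]

lemma phi_IDerII : P.IsIDerII P.phi := by
  constructor
  · intro x y
    show _ = P.ar (P.wa _ _) _
    rw [P.a2w (P.hle_ar x y), P.ax3, P.phi_ar]
  · intro x y
    show _ = P.wa (P.ar _ _) _
    rw [P.hle_wa x y, P.ax4, P.phi_wa]

lemma phi_of_le_one {x : A} (h : P.ar x P.one = P.one) : P.phi x = P.one := by
  show P.wa (P.ar x P.one) P.one = P.one
  rw [h, P.ax4]

lemma triv_order (hss : P.PSemisimple) {x y : A} (h : P.ar x y = P.one) : x = y := by
  have hk := P.N_ar h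
  exact P.ax5 x y h (hss _ hk)

lemma id_IDerII : P.IsIDerII (id : A → A) := by
  constructor
  · intro x y
    show P.ar x y = P.ar (P.wa (P.ar x y) (P.ar x y)) (P.ar x y)
    rw [P.refl_wa, P.ax3]
  · intro x y
    show P.wa x y = P.wa (P.ar (P.wa x y) (P.wa x y)) (P.wa x y)
    rw [P.refl_ar, P.ax4]

lemma pss_d_eq_id (hss : P.PSemisimple) {d : A → A} (hd : P.IsIDerII d)
    (h1 : d P.one = P.one) : d = id := by
  funext x
  have h := hd.1 P.one x
  rw [P.ax3, h1, P.ax3, P.ax3] at h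
  have hx := P.b2a x (d x)
  rw [show P.ar (P.wa x (d x)) (d x) = P.cup2 x (d x) from rfl, ← h] at hx
  exact (P.triv_order hss hx).symm

end PseudoBCI


theorem stmt14 {A : Type*} (P : PseudoBCI A) :
    (P.PSemisimple ↔
      ∀ d : A → A, P.IsIDerII d → d P.one = P.one → {x | d x = P.one} = {P.one}) ∧
    (P.PSemisimple ↔
      {d : A → A | P.IsIDerII d ∧ d P.one = P.one} = {id}) := by
  constructor
  · constructor
    · intro hss d hd h1
      rw [P.pss_d_eq_id hss hd h1]
      ext x
      simp [eq_comm]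
    · intro h x hx
      have hker := h P.phi P.phi_IDerII P.phi_one
      have hx1 : P.phi x = P.one := P.phi_of_le_one hx
      have : x ∈ {x | P.phi x = P.one} := hx1
      rw [hker] at this
      exact this
  · constructor
    · intro hss
      ext d
      simp only [Set.mem_setOf_eq, Set.mem_singleton_iff]
      constructor
      · rintro ⟨hd, h1⟩
        exact P.pss_d_eq_id hss hd h1
      · rintro rfl
        exact ⟨P.id_IDerII, rfl⟩
    · intro h x hx
      have hmem : P.phi ∈ {d : A → A | P.IsIDerII d ∧ d P.one = P.one} :=
        ⟨P.phi_IDerII, P.phi_one⟩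
      rw [h] at hmem
      have hphix : P.phi x = P.one := P.phi_of_le_one hx
      rw [Set.mem_singleton_iff] at hmem
      rw [← hphix, hmem]
      rfl
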